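/- Let η ∈ L²((0,1), r^{d-1}dr) with Jacobi coefficients a_k(η) = ∫_0^1 η(r) P_k(r) r^{d-1} dr, and define for ℓ ≥ 1 the eigenvalue λ_ℓ(η) = ∑_{k=0}^{2ℓ-2} (-1)^{k+1} a_k(η) · √(2k+d)/ℓ · (2ℓ-2+d)!(2ℓ-2)! / ((2ℓ-2+d+k)!(2ℓ-2-k)!). Then λ_ℓ(η) = -((2ℓ+d-2)/ℓ) · ∫_0^1 η(r) r^{2ℓ-2} r^{d-1} dr. -/

import Mathlib

open MeasureTheory Finset

/-- The shifted normalized Jacobi polynomials from the paper. -/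
noncomputable def jacobiP (d k : ℕ) (r : ℝ) : ℝ :=
  Real.sqrt (2 * k + d) *
    ∑ q ∈ Finset.range (k + 1),
      (-1 : ℝ) ^ q * (Nat.choose k q : ℝ) * (Nat.choose (k + q + d - 1) k : ℝ) * r ^ q

/-- The weighted Lebesgue measure `r^{d-1} dr` on `(0,1)`. -/
noncomputable def radialMeasure (d : ℕ) : Measure ℝ :=
  (volume.restrict (Set.Ioo (0:ℝ) 1)).withDensity fun r => ENNReal.ofReal (r ^ (d - 1))

/-- The Jacobi coefficients `a_k(η) = ∫_0^1 η(r) P_k(r) r^{d-1} dr`. -/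
noncomputable def jacobiCoeff (d : ℕ) (η : ℝ → ℂ) (k : ℕ) : ℂ :=
  ∫ r in Set.Ioo (0:ℝ) 1, η r * (jacobiP d k r : ℂ) * (r : ℂ) ^ (d - 1)


open scoped Nat

/-!
Expanding the monomial in the Jacobi basis, `r^m = ∑_{q ≤ m} χ_{m,q} P_q(r)`, the `k`-th
summand of `λ_ℓ(η)` is `-((2ℓ+d-2)/ℓ) χ_{2ℓ-2,k} a_k(η)`, so linearity of the integral turns
the sum into `-((2ℓ+d-2)/ℓ) ∫ η r^{2ℓ-2} r^{d-1}`. The expansion is checked coefficientwise: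
after exchanging the two sums, the coefficient of `r^p` for `p < m` is an alternating sum of
factorial quotients which telescopes to zero (Gosper's algorithm finds the antidifference).
-/

theorem alternating_factorial_sum_eq_zero (a N : ℕ) (hN : N ≠ 0) :
    ∑ i ∈ range (N + 1), (-1 : ℝ) ^ i * (a + 2 * i + 1) * (a + i)! /
      (i ! * (N - i)! * (a + N + 1 + i)!) = 0 := by
  -- Gosper antidifference: `N * (i-th summand) = U i - U (i + 1)`, and `U 0 = U (N + 1) = 0`
  set U : ℕ → ℝ := fun i ↦ (-1) ^ i * i * (N + 1 - i : ℕ) * (a + i)! /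
    (i ! * (N + 1 - i)! * (a + N + i)!)
  have hstep : ∀ i ∈ range (N + 1), (N : ℝ) * ((-1 : ℝ) ^ i * (a + 2 * i + 1) * (a + i)! /
      (i ! * (N - i)! * (a + N + 1 + i)!)) = U i - U (i + 1) := by
    intro i hi
    obtain ⟨b, rfl⟩ : ∃ b, N = i + b := ⟨N - i, by grind⟩
    simp only [U, show i + b + 1 - i = b + 1 by omega, show i + b + 1 - (i + 1) = b by omega,
      Nat.add_sub_cancel_left, show a + (i + b) + 1 + i = a + i + b + i + 1 by ring,
      show a + (i + b) + (i + 1) = a + i + b + i + 1 by ring, show a + (i + 1) = a + i + 1 by ring,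
      show a + (i + b) + i = a + i + b + i by ring, Nat.factorial_succ]
    push_cast
    field_simp
    ring
  have htel := sum_range_sub' U (N + 1)
  rw [← sum_congr rfl hstep, ← mul_sum] at htel
  simpa [U, hN] using htel

theorem sum_Icc_jacobi_inversion {d : ℕ} (hd : d ≠ 0) {p m : ℕ} (hpm : p ≤ m) :
    ∑ q ∈ Icc p m, (-1 : ℝ) ^ q * (2 * q + d) * ((m + d - 1)! * m !) /
      ((m + d + q)! * (m - q)!) * q.choose p * (q + p + d - 1).choose q =
      if p = m then (-1) ^ m else 0 := by
  obtain ⟨e, rfl⟩ : ∃ e, d = e + 1 := ⟨d - 1, by omega⟩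
  simp only [← add_assoc, Nat.add_sub_cancel]
  split_ifs with h
  · subst h
    rw [Icc_self, sum_singleton, Nat.cast_choose ℝ (by omega : p ≤ p + p + e)]
    simp only [Nat.sub_self, Nat.choose_self, show p + p + e - p = p + e by omega,
      show p + e + 1 + p = p + p + e + 1 by ring, Nat.factorial_succ]
    push_cast
    field_simp
    ring
  · obtain ⟨N, rfl⟩ : ∃ N, m = p + N := ⟨m - p, by omega⟩
    have hN : N ≠ 0 := by omega
    rw [← Ico_add_one_right_eq_Icc, sum_Ico_eq_sum_range, show p + N + 1 - p = N + 1 by omega]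
    have hterm : ∀ i ∈ range (N + 1),
        (-1 : ℝ) ^ (p + i) * (2 * (p + i : ℕ) + (e + 1 : ℕ)) * ((p + N + e)! * (p + N)!) /
          ((p + N + e + 1 + (p + i))! * (p + N - (p + i))!) * (p + i).choose p *
            (p + i + p + e).choose (p + i) =
        (-1) ^ p * (p + N + e)! * (p + N)! / (p ! * (p + e)!) *
          ((-1 : ℝ) ^ i * ((2 * p + e : ℕ) + 2 * i + 1) * (2 * p + e + i)! /
            (i ! * (N - i)! * (2 * p + e + N + 1 + i)!)) := by
      intro i _
      rw [Nat.cast_choose ℝ (by omega : p ≤ p + i),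
        Nat.cast_choose ℝ (by omega : p + i ≤ p + i + p + e),
        show p + i + p + e - (p + i) = p + e by omega, show p + i - p = i by omega,
        show p + N - (p + i) = N - i by omega, show p + i + p + e = 2 * p + e + i by ring,
        show p + N + e + 1 + (p + i) = 2 * p + e + N + 1 + i by ring]
      push_cast
      field_simp
      ring
    rw [sum_congr rfl hterm, ← mul_sum, alternating_factorial_sum_eq_zero _ _ hN, mul_zero]

/-- The paper's `χ_{k,q}`. -/
noncomputable def jacobiExpansionCoeff (d k q : ℕ) : ℝ :=
  (-1) ^ q * Real.sqrt (2 * q + d) * ((k + d - 1)! * k !) / ((k + d + q)! * (k - q)!)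

theorem pow_eq_sum_jacobiExpansionCoeff_mul_jacobiP {d : ℕ} (hd : d ≠ 0) (m : ℕ) (r : ℝ) :
    r ^ m = ∑ q ∈ range (m + 1), jacobiExpansionCoeff d m q * jacobiP d q r := by
  have hterm : ∀ q ∈ range (m + 1), jacobiExpansionCoeff d m q * jacobiP d q r =
      ∑ p ∈ range (q + 1), (-1 : ℝ) ^ q * (2 * q + d) * ((m + d - 1)! * m !) /
        ((m + d + q)! * (m - q)!) * q.choose p * (q + p + d - 1).choose q * ((-1) ^ p * r ^ p) := by
    intro q _
    have hsq : Real.sqrt (2 * q + d) * Real.sqrt (2 * q + d) = 2 * q + d :=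
      Real.mul_self_sqrt (by positivity)
    rw [jacobiExpansionCoeff, jacobiP, mul_sum, mul_sum]
    refine sum_congr rfl fun p _ ↦ ?_
    linear_combination (-1 : ℝ) ^ q * ((m + d - 1)! * m !) / ((m + d + q)! * (m - q)!) *
      (-1) ^ p * q.choose p * (q + p + d - 1).choose q * r ^ p * hsq
  rw [sum_congr rfl hterm, sum_comm' (s' := fun p ↦ Icc p m) (t' := range (m + 1)) (by grind)]
  simp_rw [← sum_mul]
  rw [sum_congr rfl fun p hp ↦ by rw [sum_Icc_jacobi_inversion hd (by grind)]]
  simp [← mul_pow, ite_mul]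

instance isFiniteMeasure_radialMeasure (d : ℕ) : IsFiniteMeasure (radialMeasure d) :=
  isFiniteMeasure_withDensity_ofReal
    ((continuous_pow (d - 1)).integrableOn_Icc.mono_set Set.Ioo_subset_Icc_self).hasFiniteIntegral

theorem integrableOn_mul_pow_of_integrable_radialMeasure {d : ℕ} {η : ℝ → ℂ}
    (hη : Integrable η (radialMeasure d)) :
    IntegrableOn (fun r ↦ η r * (r : ℂ) ^ (d - 1)) (Set.Ioo 0 1) := by
  rw [radialMeasure, integrable_withDensity_iff_integrable_smul' (by fun_prop)
    (ae_of_all _ fun _ ↦ ENNReal.ofReal_lt_top)] at hη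
  refine hη.congr ((ae_restrict_iff' measurableSet_Ioo).2 (ae_of_all _ fun r hr ↦ ?_))
  simp [ENNReal.toReal_ofReal (pow_nonneg hr.1.le _), Complex.real_smul, mul_comm]

theorem integrableOn_mul_mul_pow_of_integrable_radialMeasure {d : ℕ} {η : ℝ → ℂ}
    (hη : Integrable η (radialMeasure d)) {g : ℝ → ℂ} (hg : Continuous g) :
    IntegrableOn (fun r ↦ η r * g r * (r : ℂ) ^ (d - 1)) (Set.Ioo 0 1) := by
  obtain ⟨C, hC⟩ :=
    isCompact_Icc.exists_bound_of_continuousOn (hg.continuousOn (s := Set.Icc (0 : ℝ) 1))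
  have := (integrableOn_mul_pow_of_integrable_radialMeasure hη).bdd_mul hg.aestronglyMeasurable
    (ae_restrict_of_forall_mem measurableSet_Ioo fun r hr ↦ hC r (Set.Ioo_subset_Icc_self hr))
  exact this.congr (ae_of_all _ fun r ↦ by ring)

theorem sum_jacobiExpansionCoeff_mul_jacobiCoeff {d : ℕ} (hd : d ≠ 0) {η : ℝ → ℂ}
    (hη : Integrable η (radialMeasure d)) (m : ℕ) :
    ∑ k ∈ range (m + 1), (jacobiExpansionCoeff d m k : ℂ) * jacobiCoeff d η k =
      ∫ r in Set.Ioo 0 1, η r * (r : ℂ) ^ m * (r : ℂ) ^ (d - 1) := by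
  have hint : ∀ k ∈ range (m + 1), Integrable (fun r ↦ (jacobiExpansionCoeff d m k : ℂ) *
      (η r * (jacobiP d k r : ℂ) * (r : ℂ) ^ (d - 1))) (volume.restrict (Set.Ioo 0 1)) :=
    fun k _ ↦ (integrableOn_mul_mul_pow_of_integrable_radialMeasure hη
      (by unfold jacobiP; fun_prop)).const_mul _
  simp_rw [jacobiCoeff, ← integral_const_mul]
  rw [← integral_finsetSum _ hint]
  congr 1 with r
  have hexp :=
    congrArg (fun x : ℝ ↦ (x : ℂ)) (pow_eq_sum_jacobiExpansionCoeff_mul_jacobiP hd m r)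
  push_cast at hexp
  rw [hexp, mul_sum, sum_mul]
  exact sum_congr rfl fun k _ ↦ by ring

/-- The eigenvalue formula: for `η ∈ L²((0,1), r^{d-1}dr)`,
`λ_ℓ(η) = ∑_{k=0}^{2ℓ-2} (-1)^{k+1} a_k(η) √(2k+d)/ℓ ·
  (2ℓ-2+d)!(2ℓ-2)!/((2ℓ-2+d+k)!(2ℓ-2-k)!)`
equals `-((2ℓ+d-2)/ℓ) ∫_0^1 η(r) r^{2ℓ-2} r^{d-1} dr`. -/
theorem eigenvalue_formula (d : ℕ) (hd : 2 ≤ d) (η : ℝ → ℂ)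
    (hη : MemLp η 2 (radialMeasure d)) (ℓ : ℕ) (hℓ : 1 ≤ ℓ) :
    ∑ k ∈ Finset.range (2 * ℓ - 1),
        (-1 : ℂ) ^ (k + 1) * jacobiCoeff d η k *
          ((Real.sqrt (2 * k + d) : ℂ) / ℓ) *
            ((((2 * ℓ - 2 + d).factorial : ℂ) * ((2 * ℓ - 2).factorial : ℂ)) /
              (((2 * ℓ - 2 + d + k).factorial : ℂ) * ((2 * ℓ - 2 - k).factorial : ℂ))) =
      -(((2 * ℓ + d - 2 : ℕ) : ℂ) / ℓ) *
        ∫ r in Set.Ioo (0:ℝ) 1, η r * (r : ℂ) ^ (2 * ℓ - 2) * (r : ℂ) ^ (d - 1) := by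
  set m := 2 * ℓ - 2
  rw [show 2 * ℓ - 1 = m + 1 by omega, show 2 * ℓ + d - 2 = m + d by omega,
    ← sum_jacobiExpansionCoeff_mul_jacobiCoeff (by omega) (hη.integrable one_le_two), mul_sum]
  refine sum_congr rfl fun k _ ↦ ?_
  rw [show m + d = m + d - 1 + 1 by omega, Nat.factorial_succ,
    Nat.sub_add_cancel (by omega : 1 ≤ m + d)]
  simp only [jacobiExpansionCoeff]
  push_cast
  field_simp
  ring
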